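/- Let Γ be a monoid of class 𝒞 (cancellative, homogeneous with respect to finite generating set G, satisfying GCD_l and CM_r). Let S₀ be a finite subset of Γ with gcd_l(S₀) = e, and let L := max{l(u) : u ∈ S₀}. Then for each n ≥ 0, the map g ↦ g·S₀ is a bijection from the ball Γₙ = {g ∈ Γ : l(g) ≤ n} onto the set of left translates of S₀ contained in Γ_{n+L}, i.e. {g·S₀ : g ∈ Γ, g·S₀ ⊆ Γ_{n+L}}. -/
import Mathlib


/-- `d` left-divides `u`. -/
def LeftDvd {M : Type*} [Monoid M] (d u : M) : Prop := ∃ x : M, u = d * x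

theorem LeftDvd.trans' {M : Type*} [Monoid M] {a b c : M}
    (h1 : LeftDvd a b) (h2 : LeftDvd b c) : LeftDvd a c := by
  obtain ⟨x, rfl⟩ := h1; obtain ⟨y, rfl⟩ := h2; exact ⟨x * y, mul_assoc _ _ _⟩

theorem gcd_finset {M : Type*} [Monoid M] [DecidableEq M]
    (hGCDl : ∀ u v : M, ∃! d : M, LeftDvd d u ∧ LeftDvd d v ∧
      ∀ w : M, LeftDvd w u → LeftDvd w v → LeftDvd w d)
    (T : Finset M) (hT : T.Nonempty) :
    ∃ d : M, (∀ t ∈ T, LeftDvd d t) ∧ ∀ w : M, (∀ t ∈ T, LeftDvd w t) → LeftDvd w d := by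
  induction hT using Finset.Nonempty.cons_induction with
  | singleton a =>
    refine ⟨a, ?_, fun w hw => hw a (by simp)⟩
    intro t ht
    rw [Finset.mem_singleton] at ht
    subst ht; exact ⟨1, (mul_one t).symm⟩
  | cons a T ha hT ih =>
    obtain ⟨d', hd'1, hd'2⟩ := ih
    obtain ⟨d, ⟨hda, hdd', hdmax⟩, _⟩ := hGCDl a d'
    refine ⟨d, ?_, ?_⟩
    · intro t ht
      rcases Finset.mem_cons.mp ht with rfl | ht
      · exact hda
      · exact hdd'.trans' (hd'1 t ht)
    · intro w hw
      exact hdmax w (hw a (Finset.mem_cons_self _ _))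
        (hd'2 w fun t ht => hw t (Finset.mem_cons.mpr (Or.inr ht)))

/-- Lemma 3: for a monoid of class 𝒞 and a finite subset `S₀` with `gcd_l(S₀) = e` and
`L = max{l(u) : u ∈ S₀}`, the map `g ↦ g·S₀` is a bijection from the ball `Γₙ` onto
the set of left translates of `S₀` contained in `Γ_{n+L}`. -/
theorem stmt_8 {M : Type*} [CancelMonoid M] [DecidableEq M] (G : Finset M)
    (hgen : ∀ g : M, ∃ w : List M, (∀ x ∈ w, x ∈ G) ∧ w.prod = g)
    (l : M → ℕ)
    (hl : ∀ g : M, l g =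
      sInf {n : ℕ | ∃ w : List M, (∀ x ∈ w, x ∈ G) ∧ w.length = n ∧ w.prod = g})
    (hadd : ∀ g h : M, l (g * h) = l g + l h)
    (hGCDl : ∀ u v : M, ∃! d : M, LeftDvd d u ∧ LeftDvd d v ∧
      ∀ w : M, LeftDvd w u → LeftDvd w v → LeftDvd w d)
    (hCMr : ∀ u v : M, ∃ a b : M, a * u = b * v)
    (S₀ : Finset M) (hS₀ : S₀.Nonempty)
    (hgcd : ∀ w : M, (∀ s ∈ S₀, LeftDvd w s) → w = 1)
    (L : ℕ) (hL : L = S₀.sup l) (n : ℕ) :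
    Set.BijOn (fun g => S₀.image (fun s => g * s))
      {g : M | l g ≤ n}
      {T : Finset M | (∃ g : M, T = S₀.image (fun s => g * s)) ∧
        ∀ x ∈ T, l x ≤ n + L} := by
  -- key injectivity: if g·S₀ = h·S₀ then g = h
  have key : ∀ g h : M, S₀.image (fun s => g * s) = S₀.image (fun s => h * s) → g = h := by
    intro g h heq
    obtain ⟨d, hd1, hd2⟩ := gcd_finset hGCDl (S₀.image (fun s => g * s))
      (hS₀.image _)
    have eqg : ∀ k : M, (∀ s ∈ S₀, k * s ∈ S₀.image (fun s => g * s)) →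
        LeftDvd k d → k = d := by
      intro k hk hkd
      obtain ⟨d', rfl⟩ := hkd
      have : d' = 1 := by
        apply hgcd
        intro s hs
        obtain ⟨x, hx⟩ := hd1 (k * s) (hk s hs)
        rw [mul_assoc] at hx
        exact ⟨x, mul_left_cancel hx⟩
      rw [this, mul_one]
    have hgdvd : ∀ t ∈ S₀.image (fun s => g * s), LeftDvd g t := by
      intro t ht; obtain ⟨s, _, rfl⟩ := Finset.mem_image.mp ht; exact ⟨s, rfl⟩
    have hhdvd : ∀ t ∈ S₀.image (fun s => h * s), LeftDvd h t := by
      intro t ht; obtain ⟨s, _, rfl⟩ := Finset.mem_image.mp ht; exact ⟨s, rfl⟩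
    have hg : g = d := eqg g (fun s hs => Finset.mem_image.mpr ⟨s, hs, rfl⟩) (hd2 g hgdvd)
    have hh : h = d := by
      apply eqg h
      · intro s hs
        rw [heq]; exact Finset.mem_image.mpr ⟨s, hs, rfl⟩
      · exact hd2 h (fun t ht => hhdvd t (heq ▸ ht))
    rw [hg, hh]
  obtain ⟨s₀, hs₀mem, hs₀⟩ := Finset.exists_mem_eq_sup S₀ hS₀ l
  refine ⟨?_, ?_, ?_⟩
  · intro g hg
    refine ⟨⟨g, rfl⟩, ?_⟩
    intro x hx
    obtain ⟨s, hs, rfl⟩ := Finset.mem_image.mp hx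
    rw [hadd]
    exact add_le_add hg (hL ▸ Finset.le_sup hs)
  · intro g _ h _ heq
    exact key g h heq
  · rintro T ⟨⟨g, rfl⟩, hT⟩
    refine ⟨g, ?_, rfl⟩
    have := hT (g * s₀) (Finset.mem_image.mpr ⟨s₀, hs₀mem, rfl⟩)
    rw [hadd, hL, hs₀] at this
    exact Set.mem_setOf.mpr (by omega)
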